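/- Let x₁ = ln(1 + √2) and define φ: ℝ → ℝ piecewise by φ(x) = 4·arctan(e^{x − x₁}) for x ≤ 0 and φ(x) = π − 4·arctan(e^{−x − x₁}) for x ≥ 0. Then φ is continuously differentiable on ℝ (in particular φ(0) = π/2 and the two one-sided derivatives at 0 agree), φ satisfies φ'' = sin(φ) on (−∞,0) and φ'' = sin(φ − π) on (0,∞), φ(x) → 0 as x → −∞, and φ(x) → π as x → +∞. -/

import Mathlib

/-!
The sine-Gordon kink `k x = 4 arctan (exp x)` solves the first-order equation `k' = 2 sin (k / 2)`,
because `sin (2 arctan y) = 2 y / (1 + y²)`; differentiating once more gives `k'' = sin k`.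
The two branches of `φ` are the translate `k (x - x₁)` and the point reflection
`π - k (-x - x₁)`, which solves `φ'' = -sin (k (-x - x₁)) = sin (φ - π)`. Both branches have
derivative `k' (-x₁)` at `0`, and they take the common value `π / 2` there because
`exp (-x₁) = √2 - 1` and `2 arctan (√2 - 1) = arctan 1 = π / 4`.
-/

open Real Filter Topology

section Gluing

variable {β : Type*} {f g : ℝ → β} {a x : ℝ}

theorem ite_le_eventuallyEq_of_lt (hx : x < a) :
    (fun x => if x ≤ a then f x else g x) =ᶠ[𝓝 x] f := by
  filter_upwards [Iio_mem_nhds hx] with y hy using if_pos hy.le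

theorem ite_le_eventuallyEq_of_gt (hx : a < x) :
    (fun x => if x ≤ a then f x else g x) =ᶠ[𝓝 x] g := by
  filter_upwards [Ioi_mem_nhds hx] with y hy using if_neg (not_le.mpr hy)

theorem tendsto_ite_le_atBot {l : Filter β} (hf : Tendsto f atBot l) :
    Tendsto (fun x => if x ≤ a then f x else g x) atBot l :=
  hf.congr' <| by filter_upwards [eventually_le_atBot a] with x hx using (if_pos hx).symm

theorem tendsto_ite_le_atTop {l : Filter β} (hg : Tendsto g atTop l) :
    Tendsto (fun x => if x ≤ a then f x else g x) atTop l :=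
  hg.congr' <| by
    filter_upwards [eventually_gt_atTop a] with x hx using (if_neg (not_le.mpr hx)).symm

end Gluing

section GluingDerivatives

variable {E : Type*} [NormedAddCommGroup E] [NormedSpace ℝ E] {f g f' g' : ℝ → E} {a x : ℝ}

theorem hasDerivAt_ite_le (hf : ∀ x, HasDerivAt f (f' x) x) (hg : ∀ x, HasDerivAt g (g' x) x)
    (hfg : f a = g a) (hfg' : f' a = g' a) (x : ℝ) :
    HasDerivAt (fun x => if x ≤ a then f x else g x) (if x ≤ a then f' x else g' x) x := by
  rcases lt_trichotomy x a with hx | rfl | hx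
  · simpa [hx.le] using (hf x).congr_of_eventuallyEq (ite_le_eventuallyEq_of_lt hx)
  · have hleft : HasDerivWithinAt (fun y => if y ≤ x then f y else g y) (f' x) (Set.Iic x) x :=
      (hf x).hasDerivWithinAt.congr (fun y hy => if_pos hy) (if_pos le_rfl)
    have hright :
        HasDerivWithinAt (fun y => if y ≤ x then f y else g y) (f' x) (Set.Ici x) x := by
      rw [hfg']
      refine (hg x).hasDerivWithinAt.congr (fun y hy => ?_) (by simp [hfg])
      rcases (Set.mem_Ici.mp hy).eq_or_lt with rfl | hy
      · simp [hfg]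
      · exact if_neg (not_le.mpr hy)
    have h := hleft.union hright
    rw [Set.Iic_union_Ici, hasDerivWithinAt_univ] at h
    simpa using h
  · simpa [not_le.mpr hx] using (hg x).congr_of_eventuallyEq (ite_le_eventuallyEq_of_gt hx)

theorem contDiff_one_ite_le (hf : ∀ x, HasDerivAt f (f' x) x) (hg : ∀ x, HasDerivAt g (g' x) x)
    (hf' : Continuous f') (hg' : Continuous g') (hfg : f a = g a) (hfg' : f' a = g' a) :
    ContDiff ℝ 1 (fun x => if x ≤ a then f x else g x) := by
  have h := hasDerivAt_ite_le hf hg hfg hfg'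
  rw [contDiff_one_iff_deriv, funext fun x => (h x).deriv]
  exact ⟨fun x => (h x).differentiableAt,
    hf'.if_le hg' continuous_id continuous_const fun x hx => hx ▸ hfg'⟩

end GluingDerivatives

noncomputable def sineGordonKink (x : ℝ) : ℝ := 4 * arctan (exp x)

theorem sin_two_mul_arctan (y : ℝ) : sin (2 * arctan y) = 2 * y / (1 + y ^ 2) := by
  have h : √(1 + y ^ 2) ^ 2 = 1 + y ^ 2 := sq_sqrt (by positivity)
  rw [sin_two_mul, sin_arctan, cos_arctan]
  field_simp
  rw [h]

theorem hasDerivAt_sineGordonKink (x : ℝ) :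
    HasDerivAt sineGordonKink (2 * sin (sineGordonKink x / 2)) x := by
  unfold sineGordonKink
  refine (((hasDerivAt_arctan (exp x)).comp x (hasDerivAt_exp x)).const_mul 4).congr_deriv ?_
  rw [show 4 * arctan (exp x) / 2 = 2 * arctan (exp x) by ring, sin_two_mul_arctan]
  ring

theorem hasDerivAt_two_mul_sin_half {u : ℝ → ℝ}
    (hu : ∀ x, HasDerivAt u (2 * sin (u x / 2)) x) (x : ℝ) :
    HasDerivAt (fun x => 2 * sin (u x / 2)) (sin (u x)) x := by
  refine ((((hu x).div_const 2).sin).const_mul 2).congr_deriv ?_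
  have h : sin (u x) = 2 * sin (u x / 2) * cos (u x / 2) := by rw [← sin_two_mul]; ring_nf
  rw [h]
  ring

theorem hasDerivAt_sineGordonKink_sub_const (c x : ℝ) :
    HasDerivAt (fun x => sineGordonKink (x - c)) (2 * sin (sineGordonKink (x - c) / 2)) x :=
  (hasDerivAt_sineGordonKink (x - c)).comp_sub_const x c

theorem hasDerivAt_const_sub_sineGordonKink_neg_sub (b c x : ℝ) :
    HasDerivAt (fun x => b - sineGordonKink (-x - c))
      (2 * sin (sineGordonKink (-x - c) / 2)) x := by
  have h := ((hasDerivAt_sineGordonKink (-x - c)).comp x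
    ((hasDerivAt_neg x).sub_const c)).const_sub b
  simpa [Function.comp_def] using h

theorem hasDerivAt_deriv_sineGordonKink_neg_sub (c x : ℝ) :
    HasDerivAt (fun x => 2 * sin (sineGordonKink (-x - c) / 2))
      (-sin (sineGordonKink (-x - c))) x := by
  have h := (hasDerivAt_two_mul_sin_half hasDerivAt_sineGordonKink (-x - c)).comp x
    ((hasDerivAt_neg x).sub_const c)
  simpa [Function.comp_def] using h

theorem tendsto_sineGordonKink_atBot : Tendsto sineGordonKink atBot (𝓝 0) := by
  unfold sineGordonKink
  simpa using ((continuous_arctan.tendsto 0).comp tendsto_exp_atBot).const_mul 4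

theorem sineGordonKink_neg_log_one_add_sqrt_two :
    sineGordonKink (-log (1 + √2)) = π / 2 := by
  have hs : √2 ^ 2 = 2 := sq_sqrt zero_le_two
  have h1 : 1 < √2 := by rw [lt_sqrt zero_le_one]; norm_num
  have hexp : exp (-log (1 + √2)) = √2 - 1 := by
    rw [exp_neg, exp_log (by positivity)]
    exact inv_eq_of_mul_eq_one_right (by nlinarith)
  have hdouble : 2 * (√2 - 1) / (1 - (√2 - 1) ^ 2) = 1 := by
    rw [show 1 - (√2 - 1) ^ 2 = 2 * (√2 - 1) by nlinarith, div_self (by linarith)]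
  rw [sineGordonKink, hexp, show (4 : ℝ) = 2 * 2 by norm_num, mul_assoc,
    two_mul_arctan (by linarith) (by nlinarith), hdouble, arctan_one]
  ring

/-- The explicit type-1 π-kink of the unforced 0-π sine-Gordon equation:
with `x₁ = ln(1+√2)`, the function `φ(x) = 4 arctan(e^{x-x₁})` for `x ≤ 0`,
`φ(x) = π - 4 arctan(e^{-x-x₁})` for `x > 0`, is C¹, satisfies `φ(0) = π/2`,
`φ'' = sin φ` on `(-∞,0)`, `φ'' = sin(φ - π)` on `(0,∞)`, with limits `0` at
`-∞` and `π` at `+∞`. -/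
theorem type1_pi_kink
    (x₁ : ℝ) (hx₁ : x₁ = Real.log (1 + Real.sqrt 2))
    (φ : ℝ → ℝ)
    (hφ : ∀ x : ℝ, φ x =
      if x ≤ 0 then 4 * arctan (exp (x - x₁)) else π - 4 * arctan (exp (-x - x₁))) :
    ContDiff ℝ 1 φ ∧
    φ 0 = π / 2 ∧
    (∀ x < (0 : ℝ), deriv (deriv φ) x = sin (φ x)) ∧
    (∀ x > (0 : ℝ), deriv (deriv φ) x = sin (φ x - π)) ∧
    Tendsto φ atBot (𝓝 0) ∧
    Tendsto φ atTop (𝓝 π) := by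
  obtain rfl : φ = fun x =>
      if x ≤ 0 then sineGordonKink (x - x₁) else π - sineGordonKink (-x - x₁) := funext hφ
  have hmid : sineGordonKink (-x₁) = π / 2 := hx₁ ▸ sineGordonKink_neg_log_one_add_sqrt_two
  have hL := hasDerivAt_sineGordonKink_sub_const x₁
  have hR := hasDerivAt_const_sub_sineGordonKink_neg_sub π x₁
  have hL' := hasDerivAt_two_mul_sin_half (hasDerivAt_sineGordonKink_sub_const x₁)
  have hR' := hasDerivAt_deriv_sineGordonKink_neg_sub x₁
  refine ⟨contDiff_one_ite_le hL hR ?_ ?_ ?_ (by simp), by simp [hmid], fun x hx => ?_,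
    fun x hx => ?_, tendsto_ite_le_atBot ?_, tendsto_ite_le_atTop ?_⟩
  · exact continuous_iff_continuousAt.2 fun x => (hL' x).continuousAt
  · exact continuous_iff_continuousAt.2 fun x => (hR' x).continuousAt
  · simp only [zero_sub, neg_zero, hmid]
    ring
  · rw [(ite_le_eventuallyEq_of_lt hx).deriv.deriv_eq, funext fun y => (hL y).deriv,
      (hL' x).deriv]
    simp only [if_pos hx.le]
  · rw [(ite_le_eventuallyEq_of_gt hx).deriv.deriv_eq, funext fun y => (hR y).deriv,
      (hR' x).deriv]
    simp only [if_neg (not_le.mpr hx), sub_sub_cancel_left, sin_neg]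
  · exact tendsto_sineGordonKink_atBot.comp (tendsto_atBot_add_const_right _ _ tendsto_id)
  · simpa [sub_eq_add_neg] using (tendsto_sineGordonKink_atBot.comp
      (tendsto_atBot_add_const_right _ _ tendsto_neg_atTop_atBot)).const_sub π
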